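/- Fix n ≥ 2, c > 0, and i ∈ {1,…,n}. Let g₁,…,gₙ : ℝ → [0,∞) be bounded measurable functions with ∫_ℝ gⱼ(t) φ_c(t) dt > 0 for every j ≠ i, where φ_c(t) = (2πc)^{-1/2} exp(−t²/(2c)). Let (A_p)_{p≥1} be symmetric positive definite n×n real matrices with A_p → c I_n entrywise, and (B_p)_{p≥1} symmetric positive definite (n−1)×(n−1) real matrices with B_p → c I_{n−1} entrywise. For a symmetric positive definite m×m matrix A, let φ_A(η) = (2π)^{-m/2}(det A)^{-1/2} exp(−½ ηᵀA^{-1}η); integrals are with respect to Lebesgue measure. Then, as p → ∞, [∫_{ℝⁿ} ∏_{j=1}^n gⱼ(ηⱼ) φ_{A_p}(η) dη] / [∫_{ℝ^{n−1}} ∏_{j≠i} gⱼ(ηⱼ) φ_{B_p}(η₋ᵢ) dη₋ᵢ] → ∫_ℝ gᵢ(t) φ_c(t) dt, the denominators being strictly positive for all large p. -/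

import Mathlib

/-!
Since `Aₚ → c I`, also `Aₚ⁻¹ → c⁻¹ I` and `det Aₚ → cⁿ`, so the Gaussian densities `φ_{Aₚ}`
converge pointwise to `∏ⱼ φ_c(ηⱼ)` and are eventually dominated by a fixed multiple of
`exp (-|η|² / (4c))`. With the `gⱼ` bounded, dominated convergence sends the numerator to
`∏ⱼ ∫ gⱼ φ_c` and the denominator to the positive number `∏_{j ≠ i} ∫ gⱼ φ_c`; their quotient is
`∫ gᵢ φ_c`.
-/

open MeasureTheory Matrix Filter Topology

/-- The centered Gaussian density on `ℝᵐ` with covariance matrix `A`. -/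
noncomputable def gaussDensity {m : ℕ} (A : Matrix (Fin m) (Fin m) ℝ)
    (η : Fin m → ℝ) : ℝ :=
  (Real.sqrt ((2 * Real.pi) ^ m * A.det))⁻¹ * Real.exp (-(η ⬝ᵥ A⁻¹.mulVec η) / 2)

/-- The centered univariate Gaussian density with variance `c`. -/
noncomputable def gauss1 (c t : ℝ) : ℝ :=
  (Real.sqrt (2 * Real.pi * c))⁻¹ * Real.exp (-(t ^ 2) / (2 * c))

open Real Finset

lemma continuousAt_matrix_inv_of_det_ne_zero {ι : Type*} [Fintype ι] [DecidableEq ι]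
    {C : Matrix ι ι ℝ} (hC : C.det ≠ 0) : ContinuousAt Inv.inv C :=
  continuousAt_matrix_inv C (by simpa only [Ring.inverse_eq_inv'] using continuousAt_inv₀ hC)

lemma inv_smul_one {ι K : Type*} [Fintype ι] [DecidableEq ι] [Field K] {c : K} (hc : c ≠ 0) :
    (c • (1 : Matrix ι ι K))⁻¹ = c⁻¹ • 1 :=
  inv_eq_right_inv (by rw [smul_mul_smul_comm, mul_one, mul_inv_cancel₀ hc, one_smul])

lemma dotProduct_smul_one_mulVec {ι : Type*} [Fintype ι] [DecidableEq ι] (κ : ℝ) (η : ι → ℝ) :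
    η ⬝ᵥ (κ • (1 : Matrix ι ι ℝ)) *ᵥ η = κ * ∑ j, η j ^ 2 := by
  simp [Matrix.smul_mulVec, dotProduct, mul_sum, sq, mul_left_comm]

lemma abs_dotProduct_mulVec_le {ι : Type*} [Fintype ι] {E : Matrix ι ι ℝ} {δ : ℝ}
    (hE : ∀ a b, |E a b| ≤ δ) (η : ι → ℝ) :
    |η ⬝ᵥ E *ᵥ η| ≤ δ * (Fintype.card ι * ∑ j, η j ^ 2) := by
  rcases isEmpty_or_nonempty ι with _ | ⟨⟨a⟩⟩
  · simp
  have hδ : 0 ≤ δ := (abs_nonneg _).trans (hE a a)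
  calc |η ⬝ᵥ E *ᵥ η| = |∑ a, ∑ b, η a * E a b * η b| := by
        simp only [dotProduct, mulVec, mul_sum, mul_assoc]
    _ ≤ ∑ a, ∑ b, |η a| * δ * |η b| := by
        refine (abs_sum_le_sum_abs _ _).trans (sum_le_sum fun a _ =>
          (abs_sum_le_sum_abs _ _).trans (sum_le_sum fun b _ => ?_))
        rw [abs_mul, abs_mul]
        gcongr
        exact hE a b
    _ = δ * (∑ j, |η j|) ^ 2 := by
        rw [sq, sum_mul_sum, mul_sum]
        exact sum_congr rfl fun a _ => by rw [mul_sum]; exact sum_congr rfl fun b _ => by ring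
    _ ≤ δ * (Fintype.card ι * ∑ j, η j ^ 2) := by
        gcongr
        simpa only [sq_abs, card_univ] using
          sq_sum_le_card_mul_sum_sq (s := univ) (f := fun j => |η j|)

lemma eventually_forall_le_dotProduct_mulVec {α ι : Type*} [Fintype ι] [DecidableEq ι]
    {l : Filter α} {M : α → Matrix ι ι ℝ} {κ : ℝ} (hκ : 0 < κ)
    (hM : Tendsto M l (𝓝 (κ • 1))) :
    ∀ᶠ x in l, ∀ η : ι → ℝ, κ / 2 * ∑ j, η j ^ 2 ≤ η ⬝ᵥ M x *ᵥ η := by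
  set δ := κ / (2 * (Fintype.card ι + 1))
  have hδ : δ * Fintype.card ι ≤ κ / 2 := by
    rw [div_mul_eq_mul_div, div_le_div_iff₀ (by positivity) two_pos]
    nlinarith
  have hentry : ∀ᶠ x in l, ∀ a b, |(M x - κ • 1) a b| ≤ δ := by
    simp only [eventually_all]
    intro a b
    have := tendsto_pi_nhds.1 (tendsto_pi_nhds.1 hM a) b
    filter_upwards [(Metric.tendsto_nhds.1 this) δ (by positivity)] with x hx
    rw [Real.dist_eq] at hx
    simpa only [Matrix.sub_apply] using hx.le
  filter_upwards [hentry] with x hx η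
  have hsplit : η ⬝ᵥ M x *ᵥ η = κ * ∑ j, η j ^ 2 + η ⬝ᵥ (M x - κ • 1) *ᵥ η := by
    rw [sub_mulVec, dotProduct_sub, dotProduct_smul_one_mulVec]; ring
  have hS : 0 ≤ ∑ j, η j ^ 2 := sum_nonneg fun j _ => sq_nonneg _
  have herr := neg_le_of_abs_le (abs_dotProduct_mulVec_le hx η)
  nlinarith

lemma gaussDensity_nonneg {n : ℕ} (A : Matrix (Fin n) (Fin n) ℝ) (η : Fin n → ℝ) :
    0 ≤ gaussDensity A η := by
  unfold gaussDensity; positivity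

lemma continuous_gaussDensity {n : ℕ} (A : Matrix (Fin n) (Fin n) ℝ) :
    Continuous (gaussDensity A) := by
  unfold gaussDensity; fun_prop

lemma continuousAt_gaussDensity {n : ℕ} {C : Matrix (Fin n) (Fin n) ℝ} (hC : 0 < C.det)
    (η : Fin n → ℝ) : ContinuousAt (fun A => gaussDensity A η) C := by
  unfold gaussDensity
  refine ContinuousAt.mul ?_ ?_
  · exact ((continuous_const.mul continuous_id.matrix_det).sqrt.continuousAt).inv₀
      (sqrt_pos.2 (mul_pos (by positivity) hC)).ne'
  · exact continuous_exp.continuousAt.comp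
      (((continuous_const.dotProduct (continuous_id.matrix_mulVec continuous_const)).continuousAt
        |>.comp (continuousAt_matrix_inv_of_det_ne_zero hC.ne')).neg.div_const 2)

lemma gaussDensity_le {n : ℕ} {A : Matrix (Fin n) (Fin n) ℝ} {d κ : ℝ} {η : Fin n → ℝ}
    (hd : 0 < d) (hdet : d ≤ A.det) (hq : κ * ∑ j, η j ^ 2 ≤ η ⬝ᵥ A⁻¹ *ᵥ η) :
    gaussDensity A η ≤ (√((2 * π) ^ n * d))⁻¹ * ∏ j, exp (-(κ / 2) * η j ^ 2) := by
  unfold gaussDensity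
  rw [← exp_sum, ← mul_sum]
  gcongr
  linarith

lemma gaussDensity_smul_one {n : ℕ} {c : ℝ} (hc : 0 < c) (η : Fin n → ℝ) :
    gaussDensity (c • 1) η = ∏ j, gauss1 c (η j) := by
  have hsqrt : √((2 * π * c) ^ n) = √(2 * π * c) ^ n := by
    rw [show (2 * π * c) ^ n = (√(2 * π * c) ^ n) ^ 2 by
      rw [← pow_mul, pow_mul', sq_sqrt (by positivity)], sqrt_sq (by positivity)]
  unfold gaussDensity gauss1
  rw [inv_smul_one hc.ne', dotProduct_smul_one_mulVec, prod_mul_distrib, prod_const, ← exp_sum,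
    card_univ, Fintype.card_fin, det_smul, det_one, mul_one, Fintype.card_fin, ← mul_pow, hsqrt,
    inv_pow, mul_sum, ← sum_neg_distrib, sum_div]
  congr 2
  exact sum_congr rfl fun j _ => by field_simp

lemma integral_prod_mul_gaussDensity_smul_one {n : ℕ} {c : ℝ} (hc : 0 < c)
    (g : Fin n → ℝ → ℝ) :
    ∫ η : Fin n → ℝ, (∏ j, g j (η j)) * gaussDensity (c • 1) η
      = ∏ j, ∫ t : ℝ, g j t * gauss1 c t := by
  simp_rw [gaussDensity_smul_one hc, ← prod_mul_distrib]
  exact integral_fintype_prod_eq_prod fun j t => g j t * gauss1 c t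

lemma tendsto_integral_mul_gaussDensity {α : Type*} {l : Filter α} [l.IsCountablyGenerated]
    {n : ℕ} {c : ℝ} (hc : 0 < c) {f : (Fin n → ℝ) → ℝ} (hf : AEStronglyMeasurable f)
    {M : ℝ} (hfM : ∀ η, ‖f η‖ ≤ M) {A : α → Matrix (Fin n) (Fin n) ℝ}
    (hA : Tendsto A l (𝓝 (c • 1))) :
    Tendsto (fun x => ∫ η, f η * gaussDensity (A x) η) l
      (𝓝 (∫ η, f η * gaussDensity (c • 1) η)) := by
  have hdetC : 0 < (c • (1 : Matrix (Fin n) (Fin n) ℝ)).det := by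
    rw [det_smul, det_one, mul_one]; positivity
  have hdet : ∀ᶠ x in l, (c • 1 : Matrix (Fin n) (Fin n) ℝ).det / 2 ≤ (A x).det :=
    ((continuous_id.matrix_det.tendsto _).comp hA).eventually
      (eventually_ge_nhds (half_lt_self hdetC))
  have hinv : Tendsto (fun x => (A x)⁻¹) l (𝓝 (c⁻¹ • 1)) := by
    rw [← inv_smul_one hc.ne']
    exact (continuousAt_matrix_inv_of_det_ne_zero hdetC.ne').tendsto.comp hA
  refine tendsto_integral_filter_of_dominated_convergence
    (fun η => M * ((√((2 * π) ^ n * ((c • 1 : Matrix (Fin n) (Fin n) ℝ).det / 2)))⁻¹ *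
      ∏ j, exp (-(c⁻¹ / 2 / 2) * η j ^ 2)))
    (Eventually.of_forall fun x => hf.mul (continuous_gaussDensity _).aestronglyMeasurable)
    ?_ ?_ ?_
  · filter_upwards [hdet, eventually_forall_le_dotProduct_mulVec (inv_pos.2 hc) hinv]
      with x hdetx hquadx
    refine ae_of_all _ fun η => ?_
    rw [norm_mul, Real.norm_of_nonneg (gaussDensity_nonneg _ _)]
    exact mul_le_mul (hfM η) (gaussDensity_le (half_pos hdetC) hdetx (hquadx η))
      (gaussDensity_nonneg _ _) ((norm_nonneg _).trans (hfM η))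
  · exact ((Integrable.fintype_prod (f := fun _ t => exp (-(c⁻¹ / 2 / 2) * t ^ 2))
      fun _ => integrable_exp_neg_mul_sq (by positivity)).const_mul _).const_mul _
  · exact ae_of_all _ fun η =>
      tendsto_const_nhds.mul ((continuousAt_gaussDensity hdetC η).tendsto.comp hA)

lemma tendsto_integral_prod_mul_gaussDensity {α : Type*} {l : Filter α}
    [l.IsCountablyGenerated] {n : ℕ} {c : ℝ} (hc : 0 < c) {g : Fin n → ℝ → ℝ}
    (hgm : ∀ j, Measurable (g j)) (hgb : ∀ j, ∃ B, ∀ t, ‖g j t‖ ≤ B)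
    {A : α → Matrix (Fin n) (Fin n) ℝ} (hA : Tendsto A l (𝓝 (c • 1))) :
    Tendsto (fun x => ∫ η, (∏ j, g j (η j)) * gaussDensity (A x) η) l
      (𝓝 (∏ j, ∫ t, g j t * gauss1 c t)) := by
  choose B hB using hgb
  rw [← integral_prod_mul_gaussDensity_smul_one hc g]
  refine tendsto_integral_mul_gaussDensity hc ?_ (M := ∏ j, B j) (fun η => ?_) hA
  · exact (Finset.measurable_prod _ fun j _ => (hgm j).comp (measurable_pi_apply j))
      |>.aestronglyMeasurable
  · rw [norm_prod]
    exact prod_le_prod (fun j _ => norm_nonneg _) fun j _ => hB j _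

theorem loo_predictive_density_limit_general
    (m : ℕ) (c : ℝ) (hc : 0 < c) (i : Fin (m + 1))
    (g : Fin (m + 1) → ℝ → ℝ)
    (hgm : ∀ j, Measurable (g j)) (hg0 : ∀ j t, 0 ≤ g j t)
    (hgb : ∀ j, ∃ B, ∀ t, g j t ≤ B)
    (hgpos : ∀ j, j ≠ i → 0 < ∫ t : ℝ, g j t * gauss1 c t)
    (A : ℕ → Matrix (Fin (m + 1)) (Fin (m + 1)) ℝ)
    (hAc : ∀ a b, Tendsto (fun p => A p a b) atTop
      (𝓝 ((c • (1 : Matrix (Fin (m + 1)) (Fin (m + 1)) ℝ)) a b)))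
    (B : ℕ → Matrix (Fin m) (Fin m) ℝ)
    (hBc : ∀ a b, Tendsto (fun p => B p a b) atTop
      (𝓝 ((c • (1 : Matrix (Fin m) (Fin m) ℝ)) a b))) :
    Tendsto (fun p =>
        (∫ η : Fin (m + 1) → ℝ, (∏ j, g j (η j)) * gaussDensity (A p) η) /
        (∫ η : Fin m → ℝ, (∏ k, g (i.succAbove k) (η k)) * gaussDensity (B p) η))
      atTop (𝓝 (∫ t : ℝ, g i t * gauss1 c t)) ∧
    (∀ᶠ p in atTop,
      0 < ∫ η : Fin m → ℝ, (∏ k, g (i.succAbove k) (η k)) * gaussDensity (B p) η) := by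
  have hgb_norm : ∀ j, ∃ b, ∀ t, ‖g j t‖ ≤ b := fun j =>
    (hgb j).imp fun b hb t => (Real.norm_of_nonneg (hg0 j t)).trans_le (hb t)
  have hnum := tendsto_integral_prod_mul_gaussDensity hc hgm hgb_norm
    (tendsto_pi_nhds.2 fun a => tendsto_pi_nhds.2 (hAc a))
  have hden := tendsto_integral_prod_mul_gaussDensity hc (fun k => hgm (i.succAbove k))
    (fun k => hgb_norm (i.succAbove k)) (tendsto_pi_nhds.2 fun a => tendsto_pi_nhds.2 (hBc a))
  have hD : 0 < ∏ k : Fin m, ∫ t, g (i.succAbove k) t * gauss1 c t :=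
    prod_pos fun k _ => hgpos _ (Fin.succAbove_ne i k)
  refine ⟨?_, hden.eventually (eventually_gt_nhds hD)⟩
  have hratio := hnum.div hden hD.ne'
  rwa [Fin.prod_univ_succAbove _ i, mul_div_cancel_right₀ _ hD.ne'] at hratio

/-- **Equation (eq:py_finite) of Theorem 4.** With `n = m + 1 ≥ 2` observations, if
`Aₚ → cIₙ` and `Bₚ → cI_{n−1}` entrywise, the ratio of the full to the leave-one-out
Gaussian product integrals converges to `∫ gᵢ φ_c`, the denominators being eventually
strictly positive. -/
theorem loo_predictive_density_limit
    (m : ℕ) (hm : 1 ≤ m) (c : ℝ) (hc : 0 < c) (i : Fin (m + 1))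
    (g : Fin (m + 1) → ℝ → ℝ)
    (hgm : ∀ j, Measurable (g j)) (hg0 : ∀ j t, 0 ≤ g j t)
    (hgb : ∀ j, ∃ B, ∀ t, g j t ≤ B)
    (hgpos : ∀ j, j ≠ i → 0 < ∫ t : ℝ, g j t * gauss1 c t)
    (A : ℕ → Matrix (Fin (m + 1)) (Fin (m + 1)) ℝ) (hA : ∀ p, (A p).PosDef)
    (hAc : ∀ a b, Tendsto (fun p => A p a b) atTop
      (𝓝 ((c • (1 : Matrix (Fin (m + 1)) (Fin (m + 1)) ℝ)) a b)))
    (B : ℕ → Matrix (Fin m) (Fin m) ℝ) (hB : ∀ p, (B p).PosDef)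
    (hBc : ∀ a b, Tendsto (fun p => B p a b) atTop
      (𝓝 ((c • (1 : Matrix (Fin m) (Fin m) ℝ)) a b))) :
    Tendsto (fun p =>
        (∫ η : Fin (m + 1) → ℝ, (∏ j, g j (η j)) * gaussDensity (A p) η) /
        (∫ η : Fin m → ℝ, (∏ k, g (i.succAbove k) (η k)) * gaussDensity (B p) η))
      atTop (𝓝 (∫ t : ℝ, g i t * gauss1 c t)) ∧
    (∀ᶠ p in atTop,
      0 < ∫ η : Fin m → ℝ, (∏ k, g (i.succAbove k) (η k)) * gaussDensity (B p) η) :=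
  loo_predictive_density_limit_general m c hc i g hgm hg0 hgb hgpos A hAc B hBc
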